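/- arXiv:0809.3047 — 6 statements merged into one kernel-verified Lean document; each statement's English description precedes it below -/
import Mathlib

section
/- In a unital Banach algebra, the identity element is not a commutator, i.e., there do not exist elements A and B with AB - BA = 1. -/
/-- Wintner's theorem: in a nontrivial unital complex Banach algebra,
the identity is not a commutator. -/
theorem stmt_0 (𝒜 : Type*) [NormedRing 𝒜] [NormedAlgebra ℂ 𝒜]
    [CompleteSpace 𝒜] [Nontrivial 𝒜] :
    ¬ ∃ A B : 𝒜, A * B - B * A = 1 := by
  rintro ⟨A, B, h⟩
  have key : ∀ n : ℕ, A * B ^ (n + 1) - B ^ (n + 1) * A = (n + 1) • B ^ n := by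
    intro n
    induction n with
    | zero => simpa using h
    | succ n ih =>
      have e : A * B ^ (n + 2) - B ^ (n + 2) * A
          = (A * B ^ (n + 1) - B ^ (n + 1) * A) * B + B ^ (n + 1) * (A * B - B * A) := by
        noncomm_ring
      rw [e, ih, h, smul_mul_assoc, ← pow_succ, mul_one, succ_nsmul (B ^ (n+1)) (n+1)]
  have key' : ∀ n : ℕ, A * B ^ (n + 1) - B ^ (n + 1) * A = ((n : ℂ) + 1) • B ^ n := by
    intro n
    rw [key n, show ((n : ℂ) + 1) = ((n + 1 : ℕ) : ℂ) by push_cast; ring,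
      Nat.cast_smul_eq_nsmul]
  have hpow : ∀ n : ℕ, B ^ n ≠ 0 := by
    intro n
    induction n with
    | zero => simp
    | succ n ih =>
      intro hz
      have h2 := key' n
      rw [hz, mul_zero, zero_mul, sub_zero] at h2
      rcases smul_eq_zero.mp h2.symm with h3 | h3
      · exact Nat.cast_add_one_ne_zero n h3
      · exact ih h3
  have key'' : ∀ n : ℕ, A * B ^ (n + 1) - B ^ (n + 1) * A = ((n : ℝ) + 1) • B ^ n := by
    intro n
    rw [key n, show ((n : ℝ) + 1) = ((n + 1 : ℕ) : ℝ) by push_cast; ring,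
      Nat.cast_smul_eq_nsmul]
  have bound : ∀ n : ℕ, ((n : ℝ) + 1) * ‖B ^ n‖ ≤ 2 * ‖A‖ * ‖B‖ * ‖B ^ n‖ := by
    intro n
    calc ((n : ℝ) + 1) * ‖B ^ n‖ = ‖((n : ℝ) + 1) • B ^ n‖ := by
          rw [norm_smul]
          simp [abs_of_nonneg (by positivity : (0:ℝ) ≤ (n : ℝ) + 1)]
      _ = ‖A * B ^ (n + 1) - B ^ (n + 1) * A‖ := by rw [key'' n]
      _ ≤ ‖A * B ^ (n + 1)‖ + ‖B ^ (n + 1) * A‖ := norm_sub_le _ _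
      _ ≤ ‖A‖ * ‖B ^ (n + 1)‖ + ‖B ^ (n + 1)‖ * ‖A‖ := by
          gcongr <;> exact norm_mul_le _ _
      _ = 2 * ‖A‖ * ‖B ^ (n + 1)‖ := by ring
      _ ≤ 2 * ‖A‖ * (‖B ^ n‖ * ‖B‖) := by
          have := norm_mul_le (B ^ n) B
          rw [← pow_succ] at this
          have hA : (0:ℝ) ≤ 2 * ‖A‖ := by positivity
          exact mul_le_mul_of_nonneg_left this hA
      _ = 2 * ‖A‖ * ‖B‖ * ‖B ^ n‖ := by ring
  obtain ⟨n, hn⟩ := exists_nat_gt (2 * ‖A‖ * ‖B‖)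
  have hBpos : 0 < ‖B ^ n‖ := norm_pos_iff.mpr (hpow n)
  nlinarith [bound n, hBpos, hn]
end

section
/- Let X be a Banach space and L, R bounded operators on X with LR = I. If T is a bounded operator such that the series Σₙ RⁿTLⁿ converges strongly to an operator T_D, then T = L(RT_D) - (RT_D)L, and also T = -(R(T_D L) - (T_D L)R); in particular T is a commutator. -/
open Filter Topology

/-- If `L R = I` and `∑ Rⁿ T Lⁿ` converges strongly to `T_D`, then
`T = D_L(R T_D) = -D_R(T_D L)`; in particular `T` is a commutator. -/
theorem stmt_3 (X : Type*) [NormedAddCommGroup X] [NormedSpace ℝ X]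
    [CompleteSpace X] (L R T TD : X →L[ℝ] X) (hLR : L * R = 1)
    (hconv : ∀ x : X, Tendsto
      (fun m : ℕ => ∑ n ∈ Finset.range m, (R ^ n) (T ((L ^ n) x))) atTop (𝓝 (TD x))) :
    T = L * (R * TD) - (R * TD) * L ∧
    T = -(R * (TD * L) - (TD * L) * R) := by
  have hLRx : ∀ x : X, L (R x) = x := by
    intro x
    have := ContinuousLinearMap.ext_iff.mp hLR x
    simpa using this
  have hkey : ∀ x : X, TD x = T x + R (TD (L x)) := by
    intro x
    have h1 : Tendsto (fun m : ℕ => ∑ n ∈ Finset.range (m+1), (R ^ n) (T ((L ^ n) x)))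
        atTop (𝓝 (TD x)) := (hconv x).comp (tendsto_add_atTop_nat 1)
    have heq : ∀ m : ℕ, ∑ n ∈ Finset.range (m+1), (R ^ n) (T ((L ^ n) x))
        = T x + R (∑ n ∈ Finset.range m, (R ^ n) (T ((L ^ n) (L x)))) := by
      intro m
      rw [Finset.sum_range_succ', map_sum]
      simp only [pow_succ, pow_succ', ContinuousLinearMap.mul_apply, pow_zero,
        ContinuousLinearMap.one_apply]
      rw [add_comm]
      congr 1
      refine Finset.sum_congr rfl fun n _ => ?_
      rw [← ContinuousLinearMap.mul_apply, ← ContinuousLinearMap.mul_apply R,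
        ← pow_succ, ← pow_succ']
    have h2 : Tendsto (fun m : ℕ => ∑ n ∈ Finset.range (m+1), (R ^ n) (T ((L ^ n) x)))
        atTop (𝓝 (T x + R (TD (L x)))) := by
      simp only [heq]
      exact tendsto_const_nhds.add ((R.continuous.tendsto _).comp (hconv (L x)))
    exact tendsto_nhds_unique h1 h2
  constructor
  · ext x
    simp only [ContinuousLinearMap.sub_apply, ContinuousLinearMap.mul_apply]
    have h3 : L (R (TD x)) = TD x := hLRx _
    have h4 : R (TD (L x)) = TD x - T x := by rw [hkey x]; abel
    rw [h3, h4]; abel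
  · ext x
    simp only [ContinuousLinearMap.neg_apply, ContinuousLinearMap.sub_apply,
      ContinuousLinearMap.mul_apply]
    have h3 : TD (L (R x)) = TD x := by rw [hLRx x]
    have h4 : R (TD (L x)) = TD x - T x := by rw [hkey x]; abel
    rw [h3, h4]; abel
end

section
/- Let X be a Banach space, L, R bounded operators with LR = I, sup_n ‖Rⁿ‖ < ∞, and ‖Lⁿ x‖ → 0 for every x ∈ X. If T = S(RL) for some bounded operator S, then the series Σₙ Rⁿ(RT - TR)Lⁿ converges strongly to -TR; consequently the commutator D_R T = RT - TR satisfies (D_R T)_D = -TR. -/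
open Filter Topology

/-- If `L R = I`, the powers of `R` are uniformly bounded, `Lⁿ → 0` strongly and
`T = S (R L)`, then `∑ Rⁿ(RT - TR)Lⁿ` converges strongly to `-T R`. -/
theorem stmt_4 (X : Type*) [NormedAddCommGroup X] [NormedSpace ℝ X]
    [CompleteSpace X] (L R S T : X →L[ℝ] X) (hLR : L * R = 1)
    (hR : ∃ M : ℝ, ∀ n : ℕ, ‖R ^ n‖ ≤ M)
    (hL : ∀ x : X, Tendsto (fun n : ℕ => ‖(L ^ n) x‖) atTop (𝓝 0))
    (hT : T = S * (R * L)) :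
    ∀ x : X, Tendsto
      (fun m : ℕ => ∑ n ∈ Finset.range (m + 1), (R ^ n) ((R * T - T * R) ((L ^ n) x)))
      atTop (𝓝 (-(T * R) x)) := by
  intro x
  obtain ⟨M, hM⟩ := hR
  have hM0 : 0 ≤ M := le_trans (norm_nonneg _) (hM 0)
  have hLRy : ∀ y : X, L (R y) = y := by
    intro y
    have := congrArg (fun A : X →L[ℝ] X => A y) hLR
    simpa using this
  have hTy : ∀ y : X, T y = S (R (L y)) := by
    intro y; rw [hT]; rfl
  have hTRL : ∀ y : X, T (R (L y)) = T y := by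
    intro y; rw [hTy (R (L y)), hLRy, ← hTy]
  -- telescoping identity
  have key : ∀ m : ℕ,
      ∑ n ∈ Finset.range (m + 1), (R ^ n) ((R * T - T * R) ((L ^ n) x))
        = (R ^ (m + 1)) (T ((L ^ m) x)) - (T * R) x := by
    intro m
    induction m with
    | zero =>
        simp [ContinuousLinearMap.sub_apply, ContinuousLinearMap.mul_apply]
    | succ m ih =>
        rw [Finset.sum_range_succ, ih]
        have h1 : (L ^ (m + 1)) x = L ((L ^ m) x) := by
          rw [pow_succ']
          rfl
        have h2 : ∀ y : X, (R ^ (m + 1)) (R y) = (R ^ (m + 2)) y := by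
          intro y
          rw [pow_succ (R) (m + 1)]
          rfl
        simp only [ContinuousLinearMap.sub_apply, ContinuousLinearMap.mul_apply,
          map_sub, h1, h2, hTRL]
        abel
  have hconv : Tendsto (fun m : ℕ => (R ^ (m + 1)) (T ((L ^ m) x))) atTop (𝓝 0) := by
    rw [tendsto_zero_iff_norm_tendsto_zero]
    have hbound : ∀ m : ℕ,
        ‖(R ^ (m + 1)) (T ((L ^ m) x))‖ ≤ M * ‖S‖ * ‖R‖ * ‖(L ^ (m + 1)) x‖ := by
      intro m
      have h1 : T ((L ^ m) x) = S (R ((L ^ (m + 1)) x)) := by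
        rw [hTy, pow_succ']
        rfl
      rw [h1]
      calc ‖(R ^ (m + 1)) (S (R ((L ^ (m + 1)) x)))‖
          ≤ ‖R ^ (m + 1)‖ * ‖S (R ((L ^ (m + 1)) x))‖ := (R ^ (m + 1)).le_opNorm _
        _ ≤ M * (‖S‖ * (‖R‖ * ‖(L ^ (m + 1)) x‖)) := by
            apply mul_le_mul (hM _) ?_ (norm_nonneg _) hM0
            calc ‖S (R ((L ^ (m + 1)) x))‖ ≤ ‖S‖ * ‖R ((L ^ (m + 1)) x)‖ :=
                  S.le_opNorm _
              _ ≤ ‖S‖ * (‖R‖ * ‖(L ^ (m + 1)) x‖) := by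
                  exact mul_le_mul_of_nonneg_left (R.le_opNorm _) (norm_nonneg S)
        _ = M * ‖S‖ * ‖R‖ * ‖(L ^ (m + 1)) x‖ := by ring
    have hlim : Tendsto (fun m : ℕ => M * ‖S‖ * ‖R‖ * ‖(L ^ (m + 1)) x‖) atTop (𝓝 0) := by
      have := ((hL x).comp (tendsto_add_atTop_nat 1)).const_mul (M * ‖S‖ * ‖R‖)
      simpa using this
    exact squeeze_zero (fun m => norm_nonneg _) hbound hlim
  have := hconv.sub_const ((T * R) x)
  rw [zero_sub] at this
  exact this.congr (fun m => (key m).symm)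
end

section
/- Let X be a Banach space and P, P₀ bounded projections on X, and L, R bounded operators satisfying LR = I, RL = I - P₀, P₀R = 0, LP₀ = 0. If T ∈ L(X) and S ∈ L(X) satisfies LS - SL = P₀TP₀ (i.e. D_L(S) = P₀TP₀ with S = R(P₀TP₀)_D), then D_R(LTP₀ - (P₀TP₀)_D L) = TP₀ and D_L(-P₀TR + R(P₀TP₀)_D) = P₀T, assuming additionally -D_R((P₀TP₀)_D L) = P₀TP₀. -/
/-- Corollary: `T P₀` and `P₀ T` are commutators, with explicit witnesses. -/
theorem stmt_6 (X : Type*) [NormedAddCommGroup X] [NormedSpace ℝ X]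
    [CompleteSpace X] (P₀ L R T TD : X →L[ℝ] X)
    (hproj : P₀ * P₀ = P₀)
    (hLR : L * R = 1) (hRL : R * L = 1 - P₀)
    (hP₀R : P₀ * R = 0) (hLP₀ : L * P₀ = 0)
    (hD1 : -(R * (TD * L) - (TD * L) * R) = P₀ * T * P₀)
    (hD2 : L * (R * TD) - (R * TD) * L = P₀ * T * P₀) :
    R * (L * T * P₀ - TD * L) - (L * T * P₀ - TD * L) * R = T * P₀ ∧
    L * (-(P₀ * T * R) + R * TD) - (-(P₀ * T * R) + R * TD) * L = P₀ * T := by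
  constructor
  · have e1 : L * T * P₀ * R = 0 := by
      rw [mul_assoc (L * T) P₀ R, hP₀R, mul_zero]
    calc R * (L * T * P₀ - TD * L) - (L * T * P₀ - TD * L) * R
        = R * L * (T * P₀) + (-(R * (TD * L) - (TD * L) * R)) - L * T * P₀ * R := by
          noncomm_ring
      _ = (1 - P₀) * (T * P₀) + P₀ * T * P₀ - 0 := by rw [hRL, hD1, e1]
      _ = T * P₀ := by noncomm_ring [hproj]
  · have e2 : L * (P₀ * T * R) = 0 := by
      rw [show L * (P₀ * T * R) = (L * P₀) * (T * R) by noncomm_ring, hLP₀, zero_mul]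
    calc L * (-(P₀ * T * R) + R * TD) - (-(P₀ * T * R) + R * TD) * L
        = (L * (R * TD) - (R * TD) * L) - L * (P₀ * T * R) + (P₀ * T) * (R * L) := by
          noncomm_ring
      _ = P₀ * T * P₀ - 0 + (P₀ * T) * (1 - P₀) := by rw [hD2, e2, hRL]
      _ = P₀ * T := by noncomm_ring
end

section
/- Let X, Y be Banach spaces and T = [[A, B],[C, D]] a bounded operator on X ⊕ Y (A : X → X, B : Y → X, C : X → Y, D : Y → Y). If A is a commutator of bounded operators on X and D is a commutator of bounded operators on Y, then T is a commutator of bounded operators on X ⊕ Y. -/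
set_option synthInstance.maxHeartbeats 1000000


/-- The 2×2 block operator on `X × Y` with entries `A, B, C, D`. -/
noncomputable def blockOp {X Y : Type*} [NormedAddCommGroup X] [NormedSpace ℝ X]
    [NormedAddCommGroup Y] [NormedSpace ℝ Y]
    (A : X →L[ℝ] X) (B : Y →L[ℝ] X) (C : X →L[ℝ] Y) (D : Y →L[ℝ] Y) :
    X × Y →L[ℝ] X × Y :=
  (A.comp (ContinuousLinearMap.fst ℝ X Y) + B.comp (ContinuousLinearMap.snd ℝ X Y)).prod
    (C.comp (ContinuousLinearMap.fst ℝ X Y) + D.comp (ContinuousLinearMap.snd ℝ X Y))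

open ContinuousLinearMap in
/-- Solvability of the shifted Sylvester equation `S Q - P S - S = R` when
`‖P‖ + ‖Q‖ < 1`. -/
lemma sylvester_solve1 {U V : Type*} [NormedAddCommGroup U] [NormedSpace ℝ U] [CompleteSpace U]
    [NormedAddCommGroup V] [NormedSpace ℝ V]
    (P : U →L[ℝ] U) (Q : V →L[ℝ] V) (h : ‖P‖ + ‖Q‖ < 1) (R : V →L[ℝ] U) :
    ∃ S : V →L[ℝ] U, S.comp Q - P.comp S - S = R := by
  set Φ : (V →L[ℝ] U) →L[ℝ] (V →L[ℝ] U) :=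
    (compL ℝ V V U).flip Q - compL ℝ V U U P with hΦdef
  have hΦap : ∀ S : V →L[ℝ] U, Φ S = S.comp Q - P.comp S := by
    intro S; simp [hΦdef]
  have hΦ : ‖Φ‖ < 1 := by
    refine lt_of_le_of_lt (opNorm_le_bound _ (by positivity) fun S => ?_) h
    rw [hΦap]
    have h1 := opNorm_comp_le S Q
    have h2 := opNorm_comp_le P S
    have := norm_sub_le (S.comp Q) (P.comp S)
    have hS : (0:ℝ) ≤ ‖S‖ := norm_nonneg S
    nlinarith [norm_nonneg Q, norm_nonneg P]
  let u := Units.oneSub Φ hΦ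
  refine ⟨u⁻¹.val (-R), ?_⟩
  have key : u.val (u⁻¹.val (-R)) = -R := by
    have := u.mul_inv
    calc u.val (u⁻¹.val (-R)) = (u.val * u⁻¹.val) (-R) := rfl
    _ = -R := by rw [this]; rfl
  have key2 : (u⁻¹.val (-R) : V →L[ℝ] U) - Φ (u⁻¹.val (-R)) = -R := by
    have hval : u.val = 1 - Φ := rfl
    rw [hval] at key
    simpa using key
  rw [hΦap] at key2
  set S := (u⁻¹.val (-R) : V →L[ℝ] U)
  rw [← neg_neg R, ← key2]
  abel

open ContinuousLinearMap in
/-- Solvability of the shifted Sylvester equation `S P + S - Q S = R` when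
`‖P‖ + ‖Q‖ < 1`. -/
lemma sylvester_solve2 {U V : Type*} [NormedAddCommGroup U] [NormedSpace ℝ U] [CompleteSpace U]
    [NormedAddCommGroup V] [NormedSpace ℝ V]
    (P : V →L[ℝ] V) (Q : U →L[ℝ] U) (h : ‖P‖ + ‖Q‖ < 1) (R : V →L[ℝ] U) :
    ∃ S : V →L[ℝ] U, S.comp P + S - Q.comp S = R := by
  set Φ : (V →L[ℝ] U) →L[ℝ] (V →L[ℝ] U) :=
    compL ℝ V U U Q - (compL ℝ V V U).flip P with hΦdef
  have hΦap : ∀ S : V →L[ℝ] U, Φ S = Q.comp S - S.comp P := by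
    intro S; simp [hΦdef]
  have hΦ : ‖Φ‖ < 1 := by
    refine lt_of_le_of_lt (opNorm_le_bound _ (by positivity) fun S => ?_) h
    rw [hΦap]
    have h1 := opNorm_comp_le S P
    have h2 := opNorm_comp_le Q S
    have := norm_sub_le (Q.comp S) (S.comp P)
    have hS : (0:ℝ) ≤ ‖S‖ := norm_nonneg S
    nlinarith [norm_nonneg Q, norm_nonneg P]
  let u := Units.oneSub Φ hΦ
  refine ⟨u⁻¹.val R, ?_⟩
  have key : u.val (u⁻¹.val R) = R := by
    have := u.mul_inv
    calc u.val (u⁻¹.val R) = (u.val * u⁻¹.val) R := rfl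
    _ = R := by rw [this]; rfl
  have key2 : (u⁻¹.val R : V →L[ℝ] U) - Φ (u⁻¹.val R) = R := by
    have hval : u.val = 1 - Φ := rfl
    rw [hval] at key
    simpa using key
  rw [hΦap] at key2
  set S := (u⁻¹.val R : V →L[ℝ] U)
  rw [← key2]
  abel

open ContinuousLinearMap in
lemma blockOp_comm {X Y : Type*} [NormedAddCommGroup X] [NormedSpace ℝ X]
    [NormedAddCommGroup Y] [NormedSpace ℝ Y]
    (A : X →L[ℝ] X) (B : Y →L[ℝ] X) (C : X →L[ℝ] Y) (D : Y →L[ℝ] Y)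
    (P : X →L[ℝ] X) (Q : Y →L[ℝ] Y) :
    blockOp A B C D * blockOp P 0 0 Q - blockOp P 0 0 Q * blockOp A B C D =
      blockOp (A * P - P * A) (B.comp Q - P.comp B) (C.comp P - Q.comp C)
        (D * Q - Q * D) := by
  ext x <;> simp [blockOp, mul_apply]

/-- If the diagonal entries of a 2×2 operator matrix are commutators, then the
matrix operator is a commutator on `X ⊕ Y`. -/
theorem stmt_12 (X Y : Type*) [NormedAddCommGroup X] [NormedSpace ℝ X]
    [CompleteSpace X] [NormedAddCommGroup Y] [NormedSpace ℝ Y] [CompleteSpace Y]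
    (A : X →L[ℝ] X) (B : Y →L[ℝ] X) (C : X →L[ℝ] Y) (D : Y →L[ℝ] Y)
    (hA : ∃ A₁ A₂ : X →L[ℝ] X, A = A₁ * A₂ - A₂ * A₁)
    (hD : ∃ D₁ D₂ : Y →L[ℝ] Y, D = D₁ * D₂ - D₂ * D₁) :
    ∃ T₁ T₂ : X × Y →L[ℝ] X × Y, blockOp A B C D = T₁ * T₂ - T₂ * T₁ := by
  obtain ⟨A₁, A₂, hAeq⟩ := hA
  obtain ⟨D₁, D₂, hDeq⟩ := hD
  -- scaling
  set c : ℝ := ‖A₂‖ + ‖D₂‖ + 1 with hc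
  have hc0 : 0 < c := by positivity
  set ε : ℝ := (2 * c)⁻¹ with hε
  have hε0 : 0 < ε := by positivity
  set a₁ : X →L[ℝ] X := ε⁻¹ • A₁ with ha₁
  set a₂ : X →L[ℝ] X := ε • A₂ with ha₂
  set d₁ : Y →L[ℝ] Y := ε⁻¹ • D₁ with hd₁
  set d₂ : Y →L[ℝ] Y := ε • D₂ with hd₂
  have hcancel : ε⁻¹ * ε = 1 := inv_mul_cancel₀ hε0.ne'
  have hcancel' : ε * ε⁻¹ = 1 := mul_inv_cancel₀ hε0.ne'
  have hAcomm : a₁ * a₂ - a₂ * a₁ = A := by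
    rw [ha₁, ha₂, hAeq]
    rw [smul_mul_assoc, mul_smul_comm, smul_smul, smul_mul_assoc, mul_smul_comm, smul_smul,
      hcancel, hcancel', one_smul, one_smul]
  have hDcomm : d₁ * d₂ - d₂ * d₁ = D := by
    rw [hd₁, hd₂, hDeq]
    rw [smul_mul_assoc, mul_smul_comm, smul_smul, smul_mul_assoc, mul_smul_comm, smul_smul,
      hcancel, hcancel', one_smul, one_smul]
  have hnorm : ‖a₂‖ + ‖d₂‖ < 1 := by
    have h1 : ‖a₂‖ = ε * ‖A₂‖ := by
      rw [ha₂, show ‖ε • A₂‖ = ‖ε‖ * ‖A₂‖ from norm_smul ε A₂, Real.norm_of_nonneg hε0.le]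
    have h2 : ‖d₂‖ = ε * ‖D₂‖ := by
      rw [hd₂, show ‖ε • D₂‖ = ‖ε‖ * ‖D₂‖ from norm_smul ε D₂, Real.norm_of_nonneg hε0.le]
    have hεc : ε * (2 * c) = 1 := inv_mul_cancel₀ (by positivity)
    have hle : ‖A₂‖ + ‖D₂‖ ≤ c := by rw [hc]; linarith
    rw [h1, h2]
    nlinarith [norm_nonneg A₂, norm_nonneg D₂]
  obtain ⟨E₁, hE₁⟩ := sylvester_solve1 a₂ d₂ hnorm B
  obtain ⟨E₂, hE₂⟩ := sylvester_solve2 a₂ d₂ hnorm C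
  refine ⟨blockOp a₁ E₁ E₂ d₁, blockOp (a₂ + 1) 0 0 d₂, ?_⟩
  rw [blockOp_comm]
  have hTL : a₁ * (a₂ + 1) - (a₂ + 1) * a₁ = A := by
    rw [← hAcomm]; noncomm_ring
  have hBR : d₁ * d₂ - d₂ * d₁ = D := hDcomm
  have hTR : E₁.comp d₂ - (a₂ + 1).comp E₁ = B := by
    rw [ContinuousLinearMap.add_comp, ContinuousLinearMap.one_def,
      ContinuousLinearMap.id_comp, ← hE₁]
    abel
  have hBL : E₂.comp (a₂ + 1) - d₂.comp E₂ = C := by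
    rw [ContinuousLinearMap.comp_add, ContinuousLinearMap.one_def,
      ContinuousLinearMap.comp_id, ← hE₂]
  rw [hTL, hBR, hTR, hBL]
end

section
/- Let 1 ≤ q < p < ∞. Every bounded linear operator from ℓ_p to ℓ_q is compact. -/
/-!
Let `T : ℓ_p → ℓ_q` be bounded. Bounded sequences in `ℓ_p` have coordinatewise convergent
subsequences, so it suffices to see that `T u_n → 0` whenever `(u_n)` is bounded and `u_n` and
`T u_n` tend to `0` coordinatewise. Such sequences split off asymptotically in `ℓ_r`:
`‖z + u_n‖^r - ‖u_n‖^r → ‖z‖^r` for every fixed `z`. If `‖T u_n‖ ≥ ε` for all `n`, summing `N`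
well-chosen terms gives `S` with `‖S‖^p ≲ N` but `‖T S‖^q ≳ N ε^q`, which contradicts
`‖T S‖ ≤ ‖T‖ ‖S‖` for large `N` because `q < p`.
-/

open scoped ENNReal
open Filter Topology Metric

theorem ENNReal.one_le_toReal {p : ℝ≥0∞} (hp : p ≠ ⊤) (h : 1 ≤ p) : 1 ≤ p.toReal := by
  simpa using ENNReal.toReal_mono hp h

theorem Real.abs_rpow_sub_rpow_le {r R a b : ℝ} (hr : 1 ≤ r) (ha : a ∈ Set.Icc 0 R)
    (hb : b ∈ Set.Icc 0 R) : |a ^ r - b ^ r| ≤ r * R ^ (r - 1) * |a - b| := by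
  have hderiv : ∀ x ∈ Set.Icc 0 R,
      HasDerivWithinAt (fun x : ℝ => x ^ r) (r * x ^ (r - 1)) (Set.Icc 0 R) x :=
    fun x _ => (Real.hasDerivAt_rpow_const (Or.inr hr)).hasDerivWithinAt
  have hbound : ∀ x ∈ Set.Icc 0 R, ‖r * x ^ (r - 1)‖ ≤ r * R ^ (r - 1) := by
    rintro x ⟨hx0, hxR⟩
    rw [Real.norm_eq_abs, abs_of_nonneg (by positivity)]
    gcongr
  exact (convex_Icc 0 R).norm_image_sub_le_of_norm_hasDerivWithin_le hderiv hbound hb ha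

theorem exists_nat_mul_rpow_lt {s : ℝ} (hs : s < 1) {B : ℝ} (hB : 0 < B) (K : ℝ) :
    ∃ N : ℕ, K * (N : ℝ) ^ s < N * B := by
  have hlim : Tendsto (fun N : ℕ => K * (N : ℝ) ^ (-(1 - s))) atTop (𝓝 (K * 0)) :=
    ((tendsto_rpow_neg_atTop (by linarith)).comp tendsto_natCast_atTop_atTop).const_mul K
  rw [mul_zero] at hlim
  obtain ⟨N, hlt, hN⟩ := ((hlim.eventually (gt_mem_nhds hB)).and
    (eventually_gt_atTop 0)).exists
  refine ⟨N, ?_⟩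
  have hNpos : (0 : ℝ) < N := Nat.cast_pos.mpr hN
  have hsplit : (N : ℝ) ^ s = (N : ℝ) ^ (-(1 - s)) * N := by
    rw [← Real.rpow_add_one hNpos.ne']
    ring_nf
  rw [hsplit, ← mul_assoc, mul_comm (N : ℝ) B]
  exact mul_lt_mul_of_pos_right hlt hNpos

theorem totallyBounded_of_forall_exists_cauchySeq {X : Type*} [UniformSpace X] {s : Set X}
    (h : ∀ u : ℕ → X, (∀ n, u n ∈ s) → ∃ φ : ℕ → ℕ, StrictMono φ ∧ CauchySeq (u ∘ φ)) :
    TotallyBounded s := by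
  intro V hV
  by_contra! hs
  obtain ⟨u, hu⟩ : ∃ u : ℕ → X, ∀ n, u n ∈ s ∧ ∀ m < n, (u n, u m) ∉ V := by
    simp only [Set.not_subset, Set.mem_iUnion, not_exists] at hs
    obtain ⟨u, hu⟩ := Set.seq_of_forall_finite_exists fun t ht => hs t ht
    exact ⟨u, fun n => ⟨(hu n).1, fun m hm => (hu n).2 (u m) ⟨m, hm, rfl⟩⟩⟩
  obtain ⟨φ, hφ, hcauchy⟩ := h u fun n => (hu n).1
  obtain ⟨N, hN⟩ := hcauchy.mem_entourage hV
  exact (hu (φ (N + 1))).2 (φ N) (hφ N.lt_succ_self) (hN (N + 1) N N.le_succ le_rfl)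

theorem isCompactOperator_of_forall_exists_cauchySeq {E F : Type*} [SeminormedAddCommGroup E]
    [UniformSpace F] [T2Space F] [CompleteSpace F] (f : E → F)
    (h : ∀ x : ℕ → E, (∀ n, ‖x n‖ ≤ 1) →
      ∃ φ : ℕ → ℕ, StrictMono φ ∧ CauchySeq fun n => f (x (φ n))) :
    IsCompactOperator f := by
  refine (isCompactOperator_iff_exists_mem_nhds_isCompact_closure_image f).2
    ⟨closedBall 0 1, closedBall_mem_nhds 0 one_pos, ?_⟩
  refine (totallyBounded_of_forall_exists_cauchySeq fun y hy => ?_).closure.isCompact_of_isClosed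
    isClosed_closure
  choose x hx hxy using hy
  obtain rfl : (fun n => f (x n)) = y := funext hxy
  exact h x fun n => mem_closedBall_zero_iff.1 (hx n)

theorem ContinuousLinearMap.not_forall_exists_norm_rpow_add_le_and_le {E F : Type*}
    [SeminormedAddCommGroup E] [SeminormedAddCommGroup F] [NormedSpace ℝ E] [NormedSpace ℝ F]
    (T : E →L[ℝ] F) {p q A B : ℝ} (hq : 0 < q) (hqp : q < p) (hA : 0 ≤ A) (hB : 0 < B) :
    ¬ ∀ z, ∃ v, ‖z + v‖ ^ p ≤ ‖z‖ ^ p + A ∧ ‖T z‖ ^ q + B ≤ ‖T (z + v)‖ ^ q := by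
  intro h
  have hp : 0 < p := hq.trans hqp
  have hsum : ∀ N : ℕ, ∃ S, ‖S‖ ^ p ≤ N * A ∧ N * B ≤ ‖T S‖ ^ q := by
    intro N
    induction N with
    | zero => exact ⟨0, by simp [Real.zero_rpow hp.ne'], by simp [Real.zero_rpow hq.ne']⟩
    | succ N ih =>
      obtain ⟨S, hS, hTS⟩ := ih
      obtain ⟨v, hv, hTv⟩ := h S
      exact ⟨S + v, by push_cast; linarith, by push_cast; linarith⟩
  obtain ⟨N, hN⟩ := exists_nat_mul_rpow_lt ((div_lt_one hp).2 hqp) hB (‖T‖ ^ q * A ^ (q / p))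
  obtain ⟨S, hS, hTS⟩ := hsum N
  refine hN.not_ge (hTS.trans ?_)
  calc ‖T S‖ ^ q ≤ (‖T‖ * ‖S‖) ^ q := by gcongr; exact T.le_opNorm S
    _ = ‖T‖ ^ q * (‖S‖ ^ p) ^ (q / p) := by
        rw [Real.mul_rpow (norm_nonneg _) (norm_nonneg _), ← Real.rpow_mul (norm_nonneg _),
          mul_div_cancel₀ q hp.ne']
    _ ≤ ‖T‖ ^ q * (N * A) ^ (q / p) := by gcongr
    _ = ‖T‖ ^ q * A ^ (q / p) * (N : ℝ) ^ (q / p) := by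
        rw [Real.mul_rpow (Nat.cast_nonneg N) hA]
        ring

namespace lp

variable {ι : Type*} {E F : ι → Type*} [∀ i, NormedAddCommGroup (E i)]
  [∀ i, NormedAddCommGroup (F i)] {p q : ℝ≥0∞}

theorem norm_add_rpow_of_disjoint (hp : 0 < p.toReal) (f g : lp E p)
    (hfg : ∀ i, f i = 0 ∨ g i = 0) :
    ‖f + g‖ ^ p.toReal = ‖f‖ ^ p.toReal + ‖g‖ ^ p.toReal := by
  refine (hasSum_norm hp (f + g)).unique ?_
  convert (hasSum_norm hp f).add (hasSum_norm hp g) using 1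
  funext i
  rcases hfg i with h | h <;> simp [h, Real.zero_rpow hp.ne']

theorem exists_strictMono_tendsto_apply [Countable ι] [∀ i, ProperSpace (E i)] (hp : p ≠ 0)
    {x : ℕ → lp E p} {C : ℝ} (hC : ∀ n, ‖x n‖ ≤ C) :
    ∃ a : ∀ i, E i, ∃ φ : ℕ → ℕ, StrictMono φ ∧
      ∀ i, Tendsto (fun n => x (φ n) i) atTop (𝓝 (a i)) := by
  have hK : IsCompact (Set.univ.pi fun i => closedBall (0 : E i) C) :=
    isCompact_univ_pi fun i => isCompact_closedBall 0 C
  obtain ⟨a, -, φ, hφ, hlim⟩ := hK.tendsto_subseq (x := fun n => ⇑(x n))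
    fun n i _ => mem_closedBall_zero_iff.2 ((norm_apply_le_norm hp (x n) i).trans (hC n))
  exact ⟨a, φ, hφ, tendsto_pi_nhds.1 hlim⟩

noncomputable def truncate [DecidableEq ι] (s : Finset ι) (f : lp E p) : lp E p :=
  ∑ i ∈ s, lp.single p i (f i)

theorem truncate_apply [DecidableEq ι] (s : Finset ι) (f : lp E p) (i : ι) :
    truncate s f i = if i ∈ s then f i else 0 := by
  rw [truncate, coeFn_sum, Finset.sum_apply]
  simp only [lp.coeFn_single, Finset.sum_pi_single]

theorem norm_truncate_add_sub_truncate_rpow [DecidableEq ι] (hp : 0 < p.toReal) (s : Finset ι)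
    (f g : lp E p) :
    ‖truncate s f + (g - truncate s g)‖ ^ p.toReal
      = ‖truncate s f‖ ^ p.toReal + ‖g - truncate s g‖ ^ p.toReal := by
  refine norm_add_rpow_of_disjoint hp _ _ fun i => ?_
  by_cases hi : i ∈ s
  · right
    simp [truncate_apply, hi]
  · left
    simp [truncate_apply, hi]

variable [Fact (1 ≤ p)]

section

variable [DecidableEq ι]

theorem norm_truncate_le (hp : 0 < p.toReal) (s : Finset ι) (f : lp E p) :
    ‖truncate s f‖ ≤ ‖f‖ := by
  rw [← Real.rpow_le_rpow_iff (norm_nonneg _) (norm_nonneg _) hp, truncate,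
    lp.norm_sum_single hp]
  exact sum_rpow_le_norm_rpow hp f s

theorem norm_sub_truncate_le (hp : 0 < p.toReal) (s : Finset ι) (f : lp E p) :
    ‖f - truncate s f‖ ≤ ‖f‖ := by
  rw [← Real.rpow_le_rpow_iff (norm_nonneg _) (norm_nonneg _) hp, truncate,
    lp.norm_compl_sum_single hp]
  simp only [sub_le_self_iff]
  exact Finset.sum_nonneg fun i _ => by positivity

theorem tendsto_truncate (hp : p ≠ ⊤) (f : lp E p) :
    Tendsto (fun s => truncate s f) atTop (𝓝 f) :=
  lp.hasSum_single hp f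

theorem tendsto_truncate_zero {α : Type*} {l : Filter α} (s : Finset ι) {u : α → lp E p}
    (hu : ∀ i, Tendsto (fun n => u n i) l (𝓝 0)) :
    Tendsto (fun n => truncate s (u n)) l (𝓝 0) := by
  have := tendsto_finsetSum s fun i _ =>
    ((isometry_single (E := E) (p := p) i).continuous.tendsto 0).comp (hu i)
  simpa [truncate] using this

theorem abs_norm_add_rpow_sub_le (hp : p ≠ ⊤) (z u : lp E p) (s : Finset ι) {R : ℝ}
    (hR : ‖z‖ + ‖u‖ ≤ R) :
    |‖z + u‖ ^ p.toReal - ‖u‖ ^ p.toReal - ‖z‖ ^ p.toReal|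
      ≤ 2 * (p.toReal * R ^ (p.toReal - 1)) * (‖z - truncate s z‖ + ‖truncate s u‖) := by
  set r := p.toReal
  have hr : 1 ≤ r := ENNReal.one_le_toReal hp Fact.out
  set K := r * R ^ (r - 1)
  have hK : 0 ≤ K := by
    have : 0 ≤ R := (add_nonneg (norm_nonneg z) (norm_nonneg u)).trans hR
    positivity
  set tz := truncate s z
  set tu := truncate s u
  have htz : ‖tz‖ ≤ ‖z‖ := norm_truncate_le (by linarith) s z
  have htu : ‖u - tu‖ ≤ ‖u‖ := norm_sub_truncate_le (by linarith) s u
  have hmem : ∀ {x : ℝ}, 0 ≤ x → x ≤ ‖z‖ + ‖u‖ → x ∈ Set.Icc 0 R :=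
    fun h0 h1 => ⟨h0, h1.trans hR⟩
  have hz : ‖z‖ ≤ ‖z‖ + ‖u‖ := le_add_of_nonneg_right (norm_nonneg u)
  have hu : ‖u‖ ≤ ‖z‖ + ‖u‖ := le_add_of_nonneg_left (norm_nonneg z)
  -- `tz + (u - tu)` is within `‖z - tz‖ + ‖tu‖` of `z + u`, and its `r`-th power splits exactly
  have h1 : |‖z + u‖ ^ r - ‖tz + (u - tu)‖ ^ r| ≤ K * (‖z - tz‖ + ‖tu‖) := by
    refine (Real.abs_rpow_sub_rpow_le hr (hmem (norm_nonneg _) (norm_add_le z u))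
      (hmem (norm_nonneg _) ((norm_add_le _ _).trans (add_le_add htz htu)))).trans ?_
    gcongr
    calc |‖z + u‖ - ‖tz + (u - tu)‖| ≤ ‖(z + u) - (tz + (u - tu))‖ := abs_norm_sub_norm_le _ _
      _ = ‖(z - tz) + tu‖ := by congr 1; abel
      _ ≤ ‖z - tz‖ + ‖tu‖ := norm_add_le _ _
  have h2 : |‖tz‖ ^ r - ‖z‖ ^ r| ≤ K * ‖z - tz‖ := by
    refine (Real.abs_rpow_sub_rpow_le hr (hmem (norm_nonneg _) (htz.trans hz))
      (hmem (norm_nonneg _) hz)).trans ?_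
    rw [← norm_sub_rev tz z]
    exact mul_le_mul_of_nonneg_left (abs_norm_sub_norm_le _ _) hK
  have h3 : |‖u - tu‖ ^ r - ‖u‖ ^ r| ≤ K * ‖tu‖ := by
    refine (Real.abs_rpow_sub_rpow_le hr (hmem (norm_nonneg _) (htu.trans hu))
      (hmem (norm_nonneg _) hu)).trans ?_
    refine mul_le_mul_of_nonneg_left ((abs_norm_sub_norm_le _ _).trans_eq ?_) hK
    rw [sub_sub_cancel_left, norm_neg]
  rw [norm_truncate_add_sub_truncate_rpow (by linarith)] at h1
  rw [abs_le] at h1 h2 h3 ⊢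
  have := mul_nonneg hK (norm_nonneg (z - tz))
  have := mul_nonneg hK (norm_nonneg tu)
  constructor <;> linarith

end

theorem tendsto_norm_add_rpow_sub_norm_rpow (hp : p ≠ ⊤) (z : lp E p) {α : Type*}
    {l : Filter α} {u : α → lp E p} {C : ℝ} (hC : ∀ n, ‖u n‖ ≤ C)
    (hu : ∀ i, Tendsto (fun n => u n i) l (𝓝 0)) :
    Tendsto (fun n => ‖z + u n‖ ^ p.toReal - ‖u n‖ ^ p.toReal) l (𝓝 (‖z‖ ^ p.toReal)) := by
  classical
  rw [Metric.tendsto_nhds]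
  intro ε hε
  set K := 2 * (p.toReal * (‖z‖ + C) ^ (p.toReal - 1))
  have hz : Tendsto (fun s => K * ‖z - truncate s z‖) atTop (𝓝 0) := by
    have := ((tendsto_iff_norm_sub_tendsto_zero.1 (tendsto_truncate hp z)).const_mul K)
    simpa [norm_sub_rev] using this
  obtain ⟨s, hs⟩ := (hz.eventually (gt_mem_nhds (half_pos hε))).exists
  have hus : Tendsto (fun n => K * ‖truncate s (u n)‖) l (𝓝 0) := by
    simpa using (tendsto_truncate_zero s hu).norm.const_mul K
  filter_upwards [hus.eventually (gt_mem_nhds (half_pos hε))] with n hn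
  rw [Real.dist_eq]
  calc _ ≤ K * (‖z - truncate s z‖ + ‖truncate s (u n)‖) :=
        abs_norm_add_rpow_sub_le hp z (u n) s (by linarith [hC n])
    _ < ε := by linarith

variable [∀ i, NormedSpace ℝ (E i)] [∀ i, NormedSpace ℝ (F i)] [Fact (1 ≤ q)]

theorem exists_norm_map_lt_of_tendsto_apply (hp : p ≠ ⊤) (hqp : q < p)
    (T : lp E p →L[ℝ] lp F q) {u : ℕ → lp E p} {C : ℝ} (hC : ∀ n, ‖u n‖ ≤ C)
    (hu : ∀ i, Tendsto (fun n => u n i) atTop (𝓝 0))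
    (hTu : ∀ i, Tendsto (fun n => T (u n) i) atTop (𝓝 0)) {ε : ℝ} (hε : 0 < ε) :
    ∃ n, ‖T (u n)‖ < ε := by
  by_contra! hTε
  have hq : q ≠ ⊤ := (hqp.trans_le le_top).ne
  have hq0 : 0 < q.toReal := zero_lt_one.trans_le (ENNReal.one_le_toReal hq Fact.out)
  have hC0 : 0 ≤ C := (norm_nonneg _).trans (hC 0)
  refine T.not_forall_exists_norm_rpow_add_le_and_le hq0
    ((ENNReal.toReal_lt_toReal hq hp).2 hqp) (A := C ^ p.toReal + 1) (B := ε ^ q.toReal / 2)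
    (by positivity) (by positivity) fun z => ?_
  have hup := tendsto_norm_add_rpow_sub_norm_rpow hp z hC hu
  have hdown := tendsto_norm_add_rpow_sub_norm_rpow hq (T z)
    (fun n => T.le_opNorm_of_le (hC n)) hTu
  obtain ⟨n, hn_up, hn_down⟩ := ((hup.eventually (gt_mem_nhds (lt_add_one _))).and
    (hdown.eventually (lt_mem_nhds (sub_lt_self _ (by positivity : 0 < ε ^ q.toReal / 2))))).exists
  have hun : ‖u n‖ ^ p.toReal ≤ C ^ p.toReal := by gcongr; exact hC n
  have hTun : ε ^ q.toReal ≤ ‖T (u n)‖ ^ q.toReal := by gcongr; exact hTε n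
  refine ⟨u n, by linarith, ?_⟩
  rw [map_add]
  linarith

theorem cauchySeq_map_of_tendsto_apply (hp : p ≠ ⊤) (hqp : q < p) (T : lp E p →L[ℝ] lp F q)
    {x : ℕ → lp E p} {C : ℝ} (hC : ∀ n, ‖x n‖ ≤ C) {a : ∀ i, E i} {b : ∀ i, F i}
    (ha : ∀ i, Tendsto (fun n => x n i) atTop (𝓝 (a i)))
    (hb : ∀ i, Tendsto (fun n => T (x n) i) atTop (𝓝 (b i))) :
    CauchySeq fun n => T (x n) := by
  rw [Metric.cauchySeq_iff]
  intro ε hε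
  by_contra! h
  choose m hm k hk hmk using h
  have hm' : Tendsto m atTop atTop := tendsto_atTop_mono hm tendsto_id
  have hk' : Tendsto k atTop atTop := tendsto_atTop_mono hk tendsto_id
  obtain ⟨j, hj⟩ := exists_norm_map_lt_of_tendsto_apply hp hqp T
    (u := fun j => x (m j) - x (k j)) (C := C + C)
    (fun j => (norm_sub_le _ _).trans (add_le_add (hC _) (hC _)))
    (fun i => by simpa using ((ha i).comp hm').sub ((ha i).comp hk'))
    (fun i => by simpa using ((hb i).comp hm').sub ((hb i).comp hk')) hε
  exact (hmk j).not_gt (by rwa [dist_eq_norm, ← map_sub])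

end lp

/-- Pitt's theorem: for `1 ≤ q < p < ∞`, every bounded operator
`ℓ_p → ℓ_q` is compact. -/
theorem stmt_14 (p q : ℝ≥0∞) [Fact (1 ≤ p)] [Fact (1 ≤ q)]
    (hqp : q < p) (hp : p ≠ ⊤)
    (T : lp (fun _ : ℕ => ℝ) p →L[ℝ] lp (fun _ : ℕ => ℝ) q) :
    IsCompactOperator T := by
  refine isCompactOperator_of_forall_exists_cauchySeq T fun x hx => ?_
  obtain ⟨a, φ, hφ, ha⟩ := lp.exists_strictMono_tendsto_apply
    (zero_lt_one.trans_le (Fact.out : 1 ≤ p)).ne' hx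
  obtain ⟨b, ψ, hψ, hb⟩ := lp.exists_strictMono_tendsto_apply
    (zero_lt_one.trans_le (Fact.out : 1 ≤ q)).ne' (x := fun n => T (x (φ n)))
    fun n => T.le_opNorm_of_le (hx _)
  exact ⟨φ ∘ ψ, hφ.comp hψ, lp.cauchySeq_map_of_tendsto_apply hp hqp T (fun n => hx _)
    (fun i => (ha i).comp hψ.tendsto_atTop) hb⟩
end
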